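/- arXiv:1405.7951 — 3 statements merged into one kernel-verified Lean document; each statement's English description precedes it below -/
import Mathlib

section
/- Let A be an irreducible aperiodic 0-1 transition matrix on an alphabet of size s, and suppose A^n is strictly positive for all n ≥ n₀. Let Q_n be the number of admissible words of length n and P_n the number of periodic orbits of period n (trace of A^n). Then Q_n ≤ s^{n₀} · P_n for all n > n₀. -/
open Matrix

/-- Paths of length `m` (i.e. `m + 1` vertices) from `i` to `j` for the transition matrix `A`. -/
def PT {s : ℕ} (A : Matrix (Fin s) (Fin s) ℕ) (m : ℕ) (i j : Fin s) : Type :=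
  {x : Fin (m + 1) → Fin s // x ⟨0, Nat.succ_pos m⟩ = i ∧ x ⟨m, Nat.lt_succ_self m⟩ = j ∧
    ∀ k : ℕ, ∀ h : k < m, A (x ⟨k, by omega⟩) (x ⟨k + 1, by omega⟩) = 1}

instance {s : ℕ} (A : Matrix (Fin s) (Fin s) ℕ) (m : ℕ) (i j : Fin s) :
    Finite (PT A m i j) := by
  unfold PT; infer_instance

/-- Extend a path of length `m` by one more vertex `j`. -/
def extend1 {s : ℕ} (m : ℕ) (y : Fin (m + 1) → Fin s) (j : Fin s) : Fin (m + 2) → Fin s :=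
  fun t => if ht : t.1 < m + 1 then y ⟨t.1, ht⟩ else j

lemma extend1_lt {s m : ℕ} {y : Fin (m + 1) → Fin s} {j : Fin s} {c : ℕ} {hc : c < m + 2}
    (h' : c < m + 1) : extend1 m y j ⟨c, hc⟩ = y ⟨c, h'⟩ := dif_pos h'

lemma extend1_last {s m : ℕ} {y : Fin (m + 1) → Fin s} {j : Fin s} {c : ℕ} {hc : c < m + 2}
    (h' : ¬ c < m + 1) : extend1 m y j ⟨c, hc⟩ = j := dif_neg h'

lemma card_PT {s : ℕ} (A : Matrix (Fin s) (Fin s) ℕ)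
    (h01 : ∀ i j, A i j = 0 ∨ A i j = 1) :
    ∀ m : ℕ, ∀ i j : Fin s, Nat.card (PT A m i j) = (A ^ m) i j := by
  intro m
  induction m with
  | zero =>
    intro i j
    rw [pow_zero, Matrix.one_apply]
    by_cases h : i = j
    · subst h
      rw [if_pos rfl]
      haveI : Unique (PT A 0 i i) := by
        refine ⟨⟨⟨fun _ => i, rfl, rfl, by omega⟩⟩, ?_⟩
        intro a
        refine Subtype.ext (funext fun t => ?_)
        show a.1 t = i
        have ht : t = ⟨0, Nat.succ_pos 0⟩ := Fin.ext (Nat.lt_one_iff.mp t.isLt)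
        rw [ht]
        exact a.2.1
      exact Nat.card_unique
    · rw [if_neg h]
      haveI : IsEmpty (PT A 0 i j) := by
        constructor
        rintro ⟨x, hx0, hxl, -⟩
        exact h (hx0 ▸ hxl ▸ rfl)
      exact Nat.card_of_isEmpty
  | succ m ih =>
    intro i j
    classical
    -- the extension map
    let g : (Σ k : Fin s, PT A m i k × PLift (A k j = 1)) → PT A (m + 1) i j :=
      fun p => ⟨extend1 m p.2.1.1 j, by
          rw [extend1_lt (Nat.succ_pos m)]
          exact p.2.1.2.1, by
          rw [extend1_last (lt_irrefl (m + 1))], by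
          intro c hc
          by_cases hc' : c + 1 < m + 1
          · rw [extend1_lt (show c < m + 1 by omega), extend1_lt hc']
            exact p.2.1.2.2.2 c (by omega)
          · have hcm : c = m := by omega
            subst hcm
            rw [extend1_lt (show c < c + 1 by omega), extend1_last hc']
            have h5 : ∀ h : c < c + 1, p.2.1.1 ⟨c, h⟩ = p.1 := fun _ => p.2.1.2.2.1
            rw [h5]
            exact p.2.2.down⟩
    have hg : Function.Bijective g := by
      constructor
      · rintro ⟨k, y, h⟩ ⟨k', y', h'⟩ e
        have he : extend1 m y.1 j = extend1 m y'.1 j := congrArg Subtype.val e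
        have hy : y.1 = y'.1 := by
          funext t
          have h3 : extend1 m y.1 j ⟨t.1, by omega⟩ = extend1 m y'.1 j ⟨t.1, by omega⟩ :=
            congrFun he ⟨t.1, by omega⟩
          rw [extend1_lt t.2, extend1_lt t.2] at h3
          exact h3
        have hk : k = k' := by
          rw [← y.2.2.1, ← y'.2.2.1, hy]
        subst hk
        have hyy : y = y' := Subtype.ext hy
        subst hyy
        have hhh : h = h' := by cases h; cases h'; rfl
        rw [hhh]
      · rintro ⟨x, hx0, hxl, hxs⟩
        have hq : ∀ h : m + 1 < m + 2, x ⟨m + 1, h⟩ = j := fun _ => hxl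
        refine ⟨⟨x ⟨m, by omega⟩, ⟨⟨fun t => x ⟨t.1, by omega⟩, hx0, rfl,
          fun c hc => hxs c (by omega)⟩, PLift.up ?_⟩⟩, ?_⟩
        · have h9 := hxs m (by omega)
          rwa [hq] at h9
        · apply Subtype.ext
          funext t
          obtain ⟨c, hc⟩ := t
          show extend1 m (fun t => x ⟨t.1, by omega⟩) j ⟨c, hc⟩ = x ⟨c, hc⟩
          by_cases h' : c < m + 1
          · rw [extend1_lt h']
          · rw [extend1_last h']
            have hcm : c = m + 1 := by omega
            subst hcm
            exact (hq hc).symm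
    have hcard : Nat.card (PT A (m + 1) i j)
        = Nat.card (Σ k : Fin s, PT A m i k × PLift (A k j = 1)) :=
      (Nat.card_congr (Equiv.ofBijective g hg)).symm
    rw [hcard]
    haveI : ∀ k : Fin s, Fintype (PT A m i k) := fun k => Fintype.ofFinite _
    haveI : ∀ k : Fin s, Fintype (PLift (A k j = 1)) := fun k => Fintype.ofFinite _
    rw [Nat.card_eq_fintype_card, Fintype.card_sigma]
    rw [pow_succ, Matrix.mul_apply]
    refine Finset.sum_congr rfl fun k _ => ?_
    rw [Fintype.card_prod, ← Nat.card_eq_fintype_card, ← Nat.card_eq_fintype_card, ih i k]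
    congr 1
    rcases h01 k j with h | h
    · haveI : IsEmpty (PLift (A k j = 1)) :=
        ⟨fun p => by have := p.down; rw [h] at this; exact absurd this (by simp)⟩
      rw [Nat.card_of_isEmpty, h]
    · haveI : Nonempty (PLift (A k j = 1)) := ⟨PLift.up h⟩
      haveI : Subsingleton (PLift (A k j = 1)) :=
        ⟨fun a b => by cases a; cases b; rfl⟩
      rw [Nat.card_unique, h]

/-- Glue the prefix of a word of length `n` (indices `0..m`) with a connecting path `z`
(of length `n₀ + 1`) to get a closed path of length `n = m + n₀ + 1`. -/
def glue {s : ℕ} (n m n₀ : ℕ) (x : Fin n → Fin s) (z : Fin (n₀ + 2) → Fin s)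
    (hnm : n = m + n₀ + 1) : Fin (n + 1) → Fin s :=
  fun t => if ht : t.1 ≤ m then x ⟨t.1, by omega⟩
    else z ⟨t.1 - m, by have := t.isLt; omega⟩

lemma glue_le {s n m n₀ : ℕ} {x : Fin n → Fin s} {z : Fin (n₀ + 2) → Fin s}
    {hnm : n = m + n₀ + 1} {c : ℕ} {hc : c < n + 1} (h1 : c ≤ m) (h2 : c < n) :
    glue n m n₀ x z hnm ⟨c, hc⟩ = x ⟨c, h2⟩ := dif_pos h1

lemma glue_gt {s n m n₀ : ℕ} {x : Fin n → Fin s} {z : Fin (n₀ + 2) → Fin s}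
    {hnm : n = m + n₀ + 1} {c : ℕ} {hc : c < n + 1} (h1 : ¬ c ≤ m) (h2 : c - m < n₀ + 2) :
    glue n m n₀ x z hnm ⟨c, hc⟩ = z ⟨c - m, h2⟩ := dif_neg h1

/-- If `A` is a 0-1 transition matrix with `A^n > 0` for all `n ≥ n₀`, then the number
`Q_n` of admissible words of length `n` satisfies `Q_n ≤ s^{n₀} · P_n` for all `n > n₀`,
where `P_n = trace (A^n)` counts admissible cyclic words. -/
theorem eventual_gaussian_stmt2 (s : ℕ) (A : Matrix (Fin s) (Fin s) ℕ)
    (h01 : ∀ i j, A i j = 0 ∨ A i j = 1)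
    (n₀ : ℕ) (hpos : ∀ n : ℕ, n₀ ≤ n → ∀ i j, 0 < (A ^ n) i j) :
    ∀ n : ℕ, n₀ < n →
      Nat.card {x : Fin n → Fin s //
          ∀ i : ℕ, ∀ h : i + 1 < n, A (x ⟨i, Nat.lt_of_succ_lt h⟩) (x ⟨i + 1, h⟩) = 1}
        ≤ s ^ n₀ * (A ^ n).trace := by
  intro n hn
  classical
  obtain ⟨m, hnm⟩ : ∃ m, n = m + n₀ + 1 := ⟨n - n₀ - 1, by omega⟩
  have hmn : m < n := by omega
  have h0n : 0 < n := by omega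
  set Word := {x : Fin n → Fin s //
      ∀ i : ℕ, ∀ h : i + 1 < n, A (x ⟨i, Nat.lt_of_succ_lt h⟩) (x ⟨i + 1, h⟩) = 1} with hW
  -- nonemptiness of connecting paths
  have hconn : ∀ a b : Fin s, Nonempty (PT A (n₀ + 1) a b) := by
    intro a b
    have h1 : 0 < (A ^ (n₀ + 1)) a b := hpos (n₀ + 1) (by omega) a b
    rw [← card_PT A h01 (n₀ + 1) a b] at h1
    exact (Nat.card_pos_iff.mp h1).1
  -- the glued closed path associated to a word
  let Z : Word → Fin (n₀ + 2) → Fin s :=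
    fun x => ((hconn (x.1 ⟨m, hmn⟩) (x.1 ⟨0, h0n⟩)).some).1
  have hZ0 : ∀ x : Word, ∀ h : 0 < n₀ + 2, Z x ⟨0, h⟩ = x.1 ⟨m, hmn⟩ :=
    fun x _ => ((hconn (x.1 ⟨m, hmn⟩) (x.1 ⟨0, h0n⟩)).some).2.1
  have hZl : ∀ x : Word, ∀ h : n₀ + 1 < n₀ + 2, Z x ⟨n₀ + 1, h⟩ = x.1 ⟨0, h0n⟩ :=
    fun x _ => ((hconn (x.1 ⟨m, hmn⟩) (x.1 ⟨0, h0n⟩)).some).2.2.1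
  have hZs : ∀ x : Word, ∀ k : ℕ, ∀ h : k < n₀ + 1,
      A (Z x ⟨k, by omega⟩) (Z x ⟨k + 1, by omega⟩) = 1 :=
    fun x k h => ((hconn (x.1 ⟨m, hmn⟩) (x.1 ⟨0, h0n⟩)).some).2.2.2 k h
  -- membership of the glued path in PT A n _ _
  have hmem : ∀ x : Word,
      glue n m n₀ x.1 (Z x) hnm ⟨0, Nat.succ_pos n⟩ = x.1 ⟨0, h0n⟩ ∧
      glue n m n₀ x.1 (Z x) hnm ⟨n, Nat.lt_succ_self n⟩ = x.1 ⟨0, h0n⟩ ∧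
      ∀ k : ℕ, ∀ h : k < n,
        A (glue n m n₀ x.1 (Z x) hnm ⟨k, by omega⟩)
          (glue n m n₀ x.1 (Z x) hnm ⟨k + 1, by omega⟩) = 1 := by
    intro x
    refine ⟨?_, ?_, ?_⟩
    · rw [glue_le (Nat.zero_le m) h0n]
    · rw [glue_gt (show ¬ n ≤ m by omega) (show n - m < n₀ + 2 by omega)]
      have e : (⟨n - m, show n - m < n₀ + 2 by omega⟩ : Fin (n₀ + 2))
          = ⟨n₀ + 1, Nat.lt_succ_self (n₀ + 1)⟩ := Fin.ext (show n - m = n₀ + 1 by omega)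
      rw [e]
      exact hZl x _
    · intro k hk
      by_cases h1 : k + 1 ≤ m
      · rw [glue_le (show k ≤ m by omega) (show k < n by omega),
          glue_le h1 (show k + 1 < n by omega)]
        exact x.2 k (by omega)
      · by_cases h2 : k ≤ m
        · -- k = m
          have hkm : k = m := by omega
          subst hkm
          rw [glue_le h2 hmn, glue_gt (show ¬ k + 1 ≤ k by omega)
            (show k + 1 - k < n₀ + 2 by omega)]
          have e : (⟨k + 1 - k, show k + 1 - k < n₀ + 2 by omega⟩ : Fin (n₀ + 2))
              = ⟨1, by omega⟩ := Fin.ext (show k + 1 - k = 1 by omega)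
          rw [e, ← hZ0 x (by omega)]
          exact hZs x 0 (by omega)
        · rw [glue_gt h2 (show k - m < n₀ + 2 by omega),
            glue_gt (show ¬ k + 1 ≤ m by omega) (show k + 1 - m < n₀ + 2 by omega)]
          have e : (⟨k + 1 - m, show k + 1 - m < n₀ + 2 by omega⟩ : Fin (n₀ + 2))
              = ⟨(k - m) + 1, by omega⟩ := Fin.ext (show k + 1 - m = (k - m) + 1 by omega)
          rw [e]
          exact hZs x (k - m) (by omega)
  -- the map into suffixes × closed paths
  let F : Word → (Fin n₀ → Fin s) × (Σ i : Fin s, PT A n i i) :=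
    fun x => ⟨fun t => x.1 ⟨m + 1 + t.1, by have := t.isLt; omega⟩,
      ⟨x.1 ⟨0, h0n⟩, ⟨glue n m n₀ x.1 (Z x) hnm, hmem x⟩⟩⟩
  -- F is injective
  have hF : Function.Injective F := by
    intro x y hxy
    have h1 := congrArg Prod.fst hxy
    have h2 : glue n m n₀ x.1 (Z x) hnm = glue n m n₀ y.1 (Z y) hnm :=
      congrArg (fun p : (Fin n₀ → Fin s) × (Σ i : Fin s, PT A n i i) => p.2.2.1) hxy
    apply Subtype.ext
    funext t
    obtain ⟨c, hc⟩ := t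
    by_cases hcm : c ≤ m
    · have h3 : glue n m n₀ x.1 (Z x) hnm ⟨c, by omega⟩
          = glue n m n₀ y.1 (Z y) hnm ⟨c, by omega⟩ := congrFun h2 ⟨c, by omega⟩
      simp only [glue_le hcm (show c < n by omega)] at h3
      exact h3
    · have h4 : x.1 ⟨m + 1 + (c - (m + 1)), by omega⟩
          = y.1 ⟨m + 1 + (c - (m + 1)), by omega⟩ :=
        congrFun h1 ⟨c - (m + 1), by omega⟩
      have e : ∀ h : m + 1 + (c - (m + 1)) < n,
          (⟨m + 1 + (c - (m + 1)), h⟩ : Fin n) = ⟨c, hc⟩ :=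
        fun _ => Fin.ext (show m + 1 + (c - (m + 1)) = c by omega)
      simp only [e] at h4
      exact h4
  have hle : Nat.card Word ≤ Nat.card ((Fin n₀ → Fin s) × (Σ i : Fin s, PT A n i i)) :=
    Nat.card_le_card_of_injective F hF
  refine hle.trans ?_
  rw [Nat.card_prod]
  have h1 : Nat.card (Fin n₀ → Fin s) = s ^ n₀ := by
    simp [Nat.card_eq_fintype_card]
  haveI : ∀ i : Fin s, Fintype (PT A n i i) := fun i => Fintype.ofFinite _
  have h2 : Nat.card (Σ i : Fin s, PT A n i i) = (A ^ n).trace := by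
    rw [Nat.card_eq_fintype_card, Fintype.card_sigma, Matrix.trace]
    refine Finset.sum_congr rfl fun i _ => ?_
    rw [← Nat.card_eq_fintype_card, card_PT A h01 n i i]
    rfl
  rw [h1, h2]
end

section
/- Let A be an irreducible aperiodic 0-1 matrix with Perron eigenvalue Λ, left eigenvector u and right eigenvector v (both strictly positive, normalized so that Σ u_i v_i = 1). Define the Parry measure of the cylinder set of an admissible word j = J₁...J_n by ν(cyl(j)) = u_{J₁} · v_{J_n} / Λ^{n−1}. Suppose j = J₁...J_n and k = K₁...K_n are admissible words such that for every i ≥ 1, the number of admissible extensions of j to the right by i letters equals the number of admissible right-extensions of k by i letters, and likewise the numbers of admissible left-extensions of length i agree. Then ν(cyl(j)) = ν(cyl(k)). -/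
/-!
Conjugating `A` by the eigenvector `v` gives the stochastic matrix
`q_ij = A_ij v_j / (Λ v_i)` of the Parry chain, and the number of right-extensions of a letter `x`
by `k` letters is `Λ^k v_x (q^k v⁻¹)_x`. Since `A^m₀` is positive, `q^m₀` satisfies Doeblin's
condition, so its iterates contract every vector geometrically towards a constant, which is
bounded below by `min v⁻¹ > 0`. Equal extension counts at `x` and `y` then force `v_x = v_y`.
Applying this to `A` (right-extensions, eigenvector `v`) and to `Aᵀ` (left-extensions,
eigenvector `u`) shows that both cylinders have the same Parry measure `u_{J₁} v_{J_n} / Λ^{n−1}`.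
-/

open Matrix Finset Set Filter Topology

section Doeblin

variable {ι : Type*} [Fintype ι] [DecidableEq ι] {Q : Matrix ι ι ℝ} {δ : ι → ℝ}

theorem exists_mulVec_mem_Icc_of_minorized (hQ : Q ∈ rowStochastic ℝ ι)
    (hδ₀ : ∀ j, 0 ≤ δ j) (hδ : ∀ i j, δ j ≤ Q i j) {g : ι → ℝ} {a b : ℝ}
    (hg : ∀ j, g j ∈ Icc a b) :
    ∃ c, a ≤ c ∧ ∀ i, (Q *ᵥ g) i ∈ Icc c (c + (1 - ∑ j, δ j) * (b - a)) := by
  refine ⟨∑ j, δ j * g j + (1 - ∑ j, δ j) * a, ?_, fun i => ?_⟩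
  · have h : ∑ j, δ j * a ≤ ∑ j, δ j * g j :=
      sum_le_sum fun j _ => mul_le_mul_of_nonneg_left (hg j).1 (hδ₀ j)
    rw [← sum_mul] at h
    linarith
  · have hsplit : (Q *ᵥ g) i = ∑ j, δ j * g j + ∑ j, (Q i j - δ j) * g j := by
      rw [← sum_add_distrib]
      exact sum_congr rfl fun j _ => by ring
    have hmass : ∑ j, (Q i j - δ j) = 1 - ∑ j, δ j := by
      rw [sum_sub_distrib, sum_row_of_mem_rowStochastic hQ]
    have hlo : (1 - ∑ j, δ j) * a ≤ ∑ j, (Q i j - δ j) * g j := by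
      rw [← hmass, sum_mul]
      exact sum_le_sum fun j _ => mul_le_mul_of_nonneg_left (hg j).1 (sub_nonneg.2 (hδ i j))
    have hhi : ∑ j, (Q i j - δ j) * g j ≤ (1 - ∑ j, δ j) * b := by
      rw [← hmass, sum_mul]
      exact sum_le_sum fun j _ => mul_le_mul_of_nonneg_left (hg j).2 (sub_nonneg.2 (hδ i j))
    constructor <;> linarith

theorem exists_pow_mulVec_mem_Icc_of_minorized (hQ : Q ∈ rowStochastic ℝ ι)
    (hδ₀ : ∀ j, 0 ≤ δ j) (hδ : ∀ i j, δ j ≤ Q i j) {g : ι → ℝ} {a b : ℝ}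
    (hg : ∀ j, g j ∈ Icc a b) (k : ℕ) :
    ∃ c, a ≤ c ∧ ∀ i, (Q ^ k *ᵥ g) i ∈ Icc c (c + (1 - ∑ j, δ j) ^ k * (b - a)) := by
  induction k with
  | zero => exact ⟨a, le_rfl, fun i => by simpa using hg i⟩
  | succ k ih =>
    obtain ⟨c, hac, hc⟩ := ih
    obtain ⟨c', hcc', hc'⟩ := exists_mulVec_mem_Icc_of_minorized hQ hδ₀ hδ hc
    refine ⟨c', hac.trans hcc', fun i => ?_⟩
    rw [pow_succ' Q, ← mulVec_mulVec]
    convert hc' i using 3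
    ring

theorem exists_pow_mulVec_mem_Icc_of_pos [Nonempty ι] (hQ : Q ∈ rowStochastic ℝ ι)
    (hpos : ∀ i j, 0 < Q i j) :
    ∃ θ, 0 ≤ θ ∧ θ < 1 ∧ ∀ {g : ι → ℝ} {a b : ℝ}, (∀ j, g j ∈ Icc a b) →
      ∀ k : ℕ, ∃ c, a ≤ c ∧ ∀ i, (Q ^ k *ᵥ g) i ∈ Icc c (c + θ ^ k * (b - a)) := by
  obtain ⟨p, hp⟩ := Finite.exists_min fun p : ι × ι => Q p.1 p.2
  have hmass : 0 < ∑ _j : ι, Q p.1 p.2 := sum_pos (fun _ _ => hpos p.1 p.2) univ_nonempty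
  have hmass_le : ∑ _j : ι, Q p.1 p.2 ≤ 1 := by
    obtain ⟨i⟩ := ‹Nonempty ι›
    exact sum_row_of_mem_rowStochastic hQ i ▸ sum_le_sum fun j _ => hp (i, j)
  exact ⟨_, sub_nonneg.2 hmass_le, by linarith, fun hg k =>
    exists_pow_mulVec_mem_Icc_of_minorized hQ (fun _ => (hpos p.1 p.2).le)
      (fun i j => hp (i, j)) hg k⟩

end Doeblin

section Parry

variable {ι : Type*} [Fintype ι] [DecidableEq ι]

noncomputable def parryTransition (A : Matrix ι ι ℝ) (Λ : ℝ) (v : ι → ℝ) : Matrix ι ι ℝ :=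
  Matrix.of fun i j => A i j * v j / (Λ * v i)

variable {A : Matrix ι ι ℝ} {Λ : ℝ} {v : ι → ℝ}

theorem parryTransition_mem_rowStochastic (hA : ∀ i j, 0 ≤ A i j) (hΛ : 0 < Λ)
    (hv : ∀ i, 0 < v i) (hAv : ∀ i, ∑ j, A i j * v j = Λ * v i) :
    parryTransition A Λ v ∈ rowStochastic ℝ ι := by
  refine mem_rowStochastic_iff_sum.2 ⟨fun i j => ?_, fun i => ?_⟩
  · have := hv i; have := hv j; have := hA i j
    simp only [parryTransition, of_apply]
    positivity
  · have := hv i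
    simp only [parryTransition, of_apply, ← sum_div, hAv]
    field_simp

theorem parryTransition_pow_apply (hv : ∀ i, 0 < v i) (k : ℕ) (i j : ι) :
    (parryTransition A Λ v ^ k) i j = (A ^ k) i j * v j / (Λ ^ k * v i) := by
  induction k generalizing j with
  | zero =>
    rcases eq_or_ne i j with rfl | hij
    · simp [(hv i).ne']
    · simp [one_apply_ne hij]
  | succ k ih =>
    rw [pow_succ, mul_apply, pow_succ, mul_apply, sum_mul, sum_div]
    refine sum_congr rfl fun l _ => ?_
    have := (hv l).ne'
    rw [ih]
    simp only [parryTransition, of_apply]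
    field_simp
    ring

theorem parryTransition_pow_mulVec_inv (hv : ∀ i, 0 < v i) (k : ℕ) (i : ι) :
    (parryTransition A Λ v ^ k *ᵥ v⁻¹) i = (∑ j, (A ^ k) i j) / (Λ ^ k * v i) := by
  simp only [mulVec, dotProduct, parryTransition_pow_apply hv, Pi.inv_apply, sum_div]
  refine sum_congr rfl fun j _ => ?_
  have := (hv j).ne'
  field_simp

theorem eigenvector_apply_eq_of_sum_pow_row_eq (hA : ∀ i j, 0 ≤ A i j) {m₀ : ℕ}
    (hm₀ : ∀ i j, 0 < (A ^ m₀) i j) (hΛ : 0 < Λ) (hv : ∀ i, 0 < v i)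
    (hAv : ∀ i, ∑ j, A i j * v j = Λ * v i) {x y : ι}
    (hxy : ∀ k : ℕ, ∑ j, (A ^ k) x j = ∑ j, (A ^ k) y j) :
    v x = v y := by
  have : Nonempty ι := ⟨x⟩
  set Q := parryTransition A Λ v ^ m₀
  have hQpos : ∀ i j, 0 < Q i j := fun i j => by
    have := hm₀ i j; have := hv i; have := hv j
    simp only [Q, parryTransition_pow_apply hv]
    positivity
  obtain ⟨θ, hθ₀, hθ₁, hcontract⟩ := exists_pow_mulVec_mem_Icc_of_pos
    (pow_mem (parryTransition_mem_rowStochastic hA hΛ hv hAv) m₀) hQpos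
  obtain ⟨jmin, hmin⟩ := Finite.exists_min v⁻¹
  obtain ⟨jmax, hmax⟩ := Finite.exists_max v⁻¹
  set a := v⁻¹ jmin
  set b := v⁻¹ jmax
  have ha : 0 < a := inv_pos.2 (hv jmin)
  have hbound : ∀ k : ℕ, |v x - v y| ≤ θ ^ k * ((b - a) * v y / a) := by
    intro k
    obtain ⟨c, hac, hc⟩ := hcontract (fun j => ⟨hmin j, hmax j⟩) k
    set r := (Q ^ k *ᵥ v⁻¹) x
    set s := (Q ^ k *ᵥ v⁻¹) y
    have hrs : r * v x = s * v y := by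
      have := (hv x).ne'; have := (hv y).ne'; have := hΛ.ne'
      simp only [r, s, Q, ← pow_mul, parryTransition_pow_mulVec_inv hv, hxy]
      field_simp
    have hr : a ≤ r := hac.trans (hc x).1
    have hsr : |s - r| ≤ θ ^ k * (b - a) := by
      rw [abs_le]
      constructor <;> linarith [(hc x).1, (hc x).2, (hc y).1, (hc y).2]
    have hdiff : v x - v y = (s - r) * v y / r := by
      rw [eq_div_iff (ha.trans_le hr).ne']
      linear_combination hrs
    calc |v x - v y| = |s - r| * v y / r := by
          rw [hdiff, abs_div, abs_mul, abs_of_pos (hv y), abs_of_pos (ha.trans_le hr)]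
      _ ≤ θ ^ k * (b - a) * v y / a := by
          have := hv y
          have : a ≤ b := hmin jmax
          gcongr
      _ = θ ^ k * ((b - a) * v y / a) := by ring
  have hlim : Tendsto (fun k : ℕ => θ ^ k * ((b - a) * v y / a)) atTop (𝓝 0) := by
    simpa using (tendsto_pow_atTop_nhds_zero_of_lt_one hθ₀ hθ₁).mul_const ((b - a) * v y / a)
  exact sub_eq_zero.1 (abs_nonpos_iff.1 (ge_of_tendsto' hlim hbound))

end Parry

theorem eventual_gaussian_stmt3_general (s : ℕ) (A : Matrix (Fin s) (Fin s) ℝ)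
    (h01 : ∀ i j, A i j = 0 ∨ A i j = 1)
    (haper : ∃ m₀ : ℕ, ∀ m : ℕ, m₀ ≤ m → ∀ i j, 0 < (A ^ m) i j)
    (Λ : ℝ) (hΛ : 0 < Λ) (u v : Fin s → ℝ)
    (hu : ∀ i, 0 < u i) (hv : ∀ i, 0 < v i)
    (hleft : ∀ j, ∑ i, u i * A i j = Λ * u j)
    (hright : ∀ i, ∑ j, A i j * v j = Λ * v i)
    (n : ℕ) (hn : 0 < n) (J K : Fin n → Fin s)
    (hrightext : ∀ i : ℕ,
      ∑ l, (A ^ i) (J ⟨n - 1, Nat.sub_lt hn one_pos⟩) l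
        = ∑ l, (A ^ i) (K ⟨n - 1, Nat.sub_lt hn one_pos⟩) l)
    (hleftext : ∀ i : ℕ,
      ∑ l, (A ^ i) l (J ⟨0, hn⟩) = ∑ l, (A ^ i) l (K ⟨0, hn⟩)) :
    u (J ⟨0, hn⟩) * v (J ⟨n - 1, Nat.sub_lt hn one_pos⟩) / Λ ^ (n - 1)
      = u (K ⟨0, hn⟩) * v (K ⟨n - 1, Nat.sub_lt hn one_pos⟩) / Λ ^ (n - 1) := by
  have hA : ∀ i j, 0 ≤ A i j := fun i j => by rcases h01 i j with h | h <;> simp [h]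
  obtain ⟨m₀, hm₀⟩ := haper
  have hvJK := eigenvector_apply_eq_of_sum_pow_row_eq hA (hm₀ m₀ le_rfl) hΛ hv hright hrightext
  have huJK : u (J ⟨0, hn⟩) = u (K ⟨0, hn⟩) := by
    refine eigenvector_apply_eq_of_sum_pow_row_eq (A := Aᵀ) (fun i j => hA j i)
      (m₀ := m₀) (fun i j => ?_) hΛ hu (fun i => ?_) fun k => ?_
    · simpa [← transpose_pow] using hm₀ m₀ le_rfl j i
    · simpa [mul_comm] using hleft i
    · simpa [← transpose_pow] using hleftext k
  rw [huJK, hvJK]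

/-- Parry measure comparison: if two admissible words `J`, `K` of length `n` have the same
numbers of admissible right-extensions and left-extensions of every length `i`, then their
cylinder sets have equal Parry measure `u_{J₁} v_{J_n} / Λ^{n−1}`. -/
theorem eventual_gaussian_stmt3 (s : ℕ) (A : Matrix (Fin s) (Fin s) ℝ)
    (h01 : ∀ i j, A i j = 0 ∨ A i j = 1)
    (hirr : ∀ i j, ∃ m : ℕ, 0 < (A ^ m) i j)
    (haper : ∃ m₀ : ℕ, ∀ m : ℕ, m₀ ≤ m → ∀ i j, 0 < (A ^ m) i j)
    (Λ : ℝ) (hΛ : 0 < Λ) (u v : Fin s → ℝ)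
    (hu : ∀ i, 0 < u i) (hv : ∀ i, 0 < v i)
    (hleft : ∀ j, ∑ i, u i * A i j = Λ * u j)
    (hright : ∀ i, ∑ j, A i j * v j = Λ * v i)
    (hnorm : ∑ i, u i * v i = 1)
    (n : ℕ) (hn : 0 < n) (J K : Fin n → Fin s)
    (hJ : ∀ i : ℕ, ∀ h : i + 1 < n, A (J ⟨i, Nat.lt_of_succ_lt h⟩) (J ⟨i + 1, h⟩) = 1)
    (hK : ∀ i : ℕ, ∀ h : i + 1 < n, A (K ⟨i, Nat.lt_of_succ_lt h⟩) (K ⟨i + 1, h⟩) = 1)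
    (hrightext : ∀ i : ℕ,
      ∑ l, (A ^ i) (J ⟨n - 1, Nat.sub_lt hn one_pos⟩) l
        = ∑ l, (A ^ i) (K ⟨n - 1, Nat.sub_lt hn one_pos⟩) l)
    (hleftext : ∀ i : ℕ,
      ∑ l, (A ^ i) l (J ⟨0, hn⟩) = ∑ l, (A ^ i) l (K ⟨0, hn⟩)) :
    u (J ⟨0, hn⟩) * v (J ⟨n - 1, Nat.sub_lt hn one_pos⟩) / Λ ^ (n - 1)
      = u (K ⟨0, hn⟩) * v (K ⟨n - 1, Nat.sub_lt hn one_pos⟩) / Λ ^ (n - 1) :=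
  eventual_gaussian_stmt3_general s A h01 haper Λ hΛ u v hu hv hleft hright n hn J K hrightext
    hleftext
end

section
/- In the hyperbolic plane tessellated by regular right-angled-type 4g-gons (4g meeting at each vertex), let N be the union of the tessellation geodesics and Γ the dual Cayley graph of the surface group. A shortest edgepath in Γ between two vertices never crosses the same geodesic of N more than once; moreover, a directed shortest edgepath never crosses a geodesic L of N into the half-plane bounded by L not containing its final vertex. -/
/-- Golden Lemma (abstract wall formulation): in the dual Cayley graph of the tessellation,
each geodesic of the net is a "wall" separating the vertices into two sides, each edge
crosses exactly one wall, and reflection across a wall is a graph automorphism exchanging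
the endpoints of each crossing edge.  Then a shortest edgepath crosses each wall at most
once, and every crossing is into the side containing the final vertex. -/
theorem eventual_gaussian_stmt12 {V W : Type*}
    (E : V → V → Prop) (hsymm : ∀ u v, E u v → E v u)
    (side : W → V → Bool)
    (hcross : ∀ u v : V, E u v → ∃! g : W, side g u ≠ side g v)
    (refl : W → V ≃ V)
    (hreflE : ∀ (g : W) (u v : V), E u v → E (refl g u) (refl g v))
    (hreflswap : ∀ (g : W) (u v : V), E u v → side g u ≠ side g v → refl g u = v)
    (n : ℕ) (p : Fin (n + 1) → V)
    (hp : ∀ i : Fin n, E (p i.castSucc) (p i.succ))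
    (hshort : ∀ m : ℕ, ∀ q : Fin (m + 1) → V,
      (∀ i : Fin m, E (q i.castSucc) (q i.succ)) →
      q 0 = p 0 → q (Fin.last m) = p (Fin.last n) → n ≤ m) :
    (∀ g : W,
      (Finset.univ.filter
        (fun i : Fin n => side g (p i.castSucc) ≠ side g (p i.succ))).card ≤ 1) ∧
    (∀ g : W, ∀ i : Fin n, side g (p i.castSucc) ≠ side g (p i.succ) →
      side g (p i.succ) = side g (p (Fin.last n))) := by
  -- ℕ-indexed version of the path
  set P : ℕ → V := fun k => p ⟨min k n, Nat.lt_succ_of_le (min_le_right k n)⟩ with hPdef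
  have hPeq : ∀ k (hk : k ≤ n), P k = p ⟨k, Nat.lt_succ_of_le hk⟩ := by
    intro k hk
    simp only [hPdef]
    exact congrArg p (Fin.ext (by simp [Nat.min_eq_left hk]))
  have hE : ∀ k, k < n → E (P k) (P (k + 1)) := by
    intro k hk
    rw [hPeq k hk.le, hPeq (k + 1) hk]
    have h1 : (⟨k, Nat.lt_succ_of_le hk.le⟩ : Fin (n + 1)) = (⟨k, hk⟩ : Fin n).castSucc :=
      Fin.ext (by simp)
    have h2 : (⟨k + 1, Nat.lt_succ_of_le hk⟩ : Fin (n + 1)) = (⟨k, hk⟩ : Fin n).succ :=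
      Fin.ext (by simp)
    rw [h1, h2]; exact hp _
  have hPcs : ∀ i : Fin n, P i.val = p i.castSucc := by
    intro i
    rw [hPeq i.val i.isLt.le]
    exact congrArg p (Fin.ext (by simp))
  have hPs : ∀ i : Fin n, P (i.val + 1) = p i.succ := by
    intro i
    rw [hPeq (i.val + 1) i.isLt]
    exact congrArg p (Fin.ext (by simp))
  have hPlast : P n = p (Fin.last n) := by
    rw [hPeq n le_rfl]; exact congrArg p (Fin.ext (by simp))
  -- the key reflection argument: two crossings of the same wall give a contradiction
  have key : ∀ (g : W) (a b : ℕ), a < b → b < n →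
      side g (P a) ≠ side g (P (a + 1)) → side g (P b) ≠ side g (P (b + 1)) → False := by
    intro g a b hab hbn hca hcb
    have hn2 : 2 ≤ n := by omega
    have hra : refl g (P (a + 1)) = P a :=
      hreflswap g _ _ (hsymm _ _ (hE a (by omega))) (Ne.symm hca)
    have hrb : refl g (P b) = P (b + 1) := hreflswap g _ _ (hE b hbn) hcb
    set f : ℕ → V := fun k =>
      if k ≤ a then P k else if k < b then refl g (P (k + 1)) else P (k + 2) with hfdef
    have hfa2 : b = a + 1 → P a = P (a + 2) := by
      intro h; subst h
      rw [← hra, hrb]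
    -- adjacency of f
    have hadj : ∀ k, k < n - 2 → E (f k) (f (k + 1)) := by
      intro k hk
      by_cases h1 : k + 1 ≤ a
      · simp only [hfdef]
        rw [if_pos (by omega), if_pos h1]
        exact hE k (by omega)
      · by_cases h2 : k ≤ a
        · -- k = a
          have hka : k = a := by omega
          subst hka
          by_cases h3 : k + 1 < b
          · simp only [hfdef]
            rw [if_pos le_rfl, if_neg h1, if_pos h3, ← hra]
            exact hreflE g _ _ (hE (k + 1) (by omega))
          · -- b = k + 1
            have hb : b = k + 1 := by omega
            simp only [hfdef]
            rw [if_pos le_rfl, if_neg h1, if_neg h3, hfa2 hb]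
            exact hE (k + 2) (by omega)
        · by_cases h3 : k + 1 < b
          · simp only [hfdef]
            rw [if_neg h2, if_neg (by omega : ¬ k + 1 ≤ a), if_pos (by omega), if_pos h3]
            exact hreflE g _ _ (hE (k + 1) (by omega))
          · by_cases h4 : k < b
            · -- k = b - 1
              have hb : b = k + 1 := by omega
              simp only [hfdef]
              rw [if_neg h2, if_pos h4, if_neg (by omega : ¬ k + 1 ≤ a), if_neg h3, ← hb, hrb]
              exact hE (b + 1) (by omega)
            · simp only [hfdef]
              rw [if_neg h2, if_neg h4, if_neg (by omega : ¬ k + 1 ≤ a),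
                if_neg (by omega : ¬ k + 1 < b)]
              exact hE (k + 2) (by omega)
    have hf0 : f 0 = P 0 := by simp only [hfdef]; rw [if_pos (Nat.zero_le a)]
    have hflast : f (n - 2) = P n := by
      by_cases hb : b ≤ n - 2
      · simp only [hfdef]
        rw [if_neg (by omega), if_neg (by omega)]
        congr 1; omega
      · -- b = n - 1
        have hb' : b = n - 1 := by omega
        by_cases ha : a < n - 2
        · simp only [hfdef]
          rw [if_neg (by omega), if_pos (by omega)]
          have : n - 2 + 1 = b := by omega
          rw [this, hrb]
          congr 1; omega
        · -- a = n - 2, b = a + 1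
          have ha' : a = n - 2 := by omega
          simp only [hfdef]
          rw [if_pos (by omega)]
          have := hfa2 (by omega)
          rw [ha'.symm, this]
          congr 1; omega
    have hlen := hshort (n - 2) (fun i => f i.val)
      (by
        intro i
        have := hadj i.val i.isLt
        simpa using this)
      (by
        show f ((0 : Fin (n - 2 + 1)).val) = p 0
        have h0 : ((0 : Fin (n - 2 + 1)).val) = 0 := rfl
        rw [h0, hf0, hPeq 0 (Nat.zero_le n)]
        exact congrArg p (Fin.ext (by simp)))
      (by
        show f ((Fin.last (n - 2)).val) = p (Fin.last n)
        rw [Fin.val_last, hflast, hPlast])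
    omega
  constructor
  · intro g
    by_contra h
    push_neg at h
    rw [Finset.one_lt_card] at h
    obtain ⟨i, hi, j, hj, hij⟩ := h
    simp only [Finset.mem_filter, Finset.mem_univ, true_and] at hi hj
    rcases lt_or_gt_of_ne (fun h => hij (Fin.ext h) : i.val ≠ j.val) with hlt | hlt
    · exact key g i.val j.val hlt j.isLt
        (by rw [hPcs i, hPs i]; exact hi) (by rw [hPcs j, hPs j]; exact hj)
    · exact key g j.val i.val hlt i.isLt
        (by rw [hPcs j, hPs j]; exact hj) (by rw [hPcs i, hPs i]; exact hi)
  · intro g i hcr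
    by_contra hne
    -- there must be a later crossing
    have hlater : ∃ j : Fin n, i.val < j.val ∧
        side g (p j.castSucc) ≠ side g (p j.succ) := by
      by_contra hno
      push_neg at hno
      have hsame : ∀ k, i.val + 1 ≤ k → k ≤ n → side g (P (i.val + 1)) = side g (P k) := by
        intro k hk1 hk2
        induction k with
        | zero => omega
        | succ m ih =>
          rcases Nat.lt_or_ge (i.val + 1) (m + 1) with hlt | hge
          · have hm : m < n := by omega
            have := hno ⟨m, hm⟩ (by simp; omega)
            rw [hPcs ⟨m, hm⟩, hPs ⟨m, hm⟩] at *
            rw [ih (by omega) (by omega)]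
            exact this
          · have : i.val + 1 = m + 1 := by omega
            rw [this]
      have := hsame n (by omega) le_rfl
      rw [hPs i, hPlast] at this
      exact hne this
    obtain ⟨j, hij, hcj⟩ := hlater
    exact key g i.val j.val hij j.isLt
      (by rw [hPcs i, hPs i]; exact hcr) (by rw [hPcs j, hPs j]; exact hcj)
end
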